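/- arXiv:1204.1869 — 2 statements merged into one kernel-verified Lean document; each statement's English description precedes it below -/
import Mathlib

section
/- Under the completion-of-squares identity for the LQ system, if x(0) = 0, {w(t)} is a sequence of pairwise uncorrelated zero-mean Gaussian random vectors with covariance W, and w(t) is independent of x(t) and u(t) for each t, then E[x(N)ᵀQx(N) + Σ_{t=0}^{N−1}(x(t)ᵀQx(t)+u(t)ᵀRu(t))] = E[Σ_{t=0}^{N−1}(u(t)+L(t)x(t))ᵀ(BᵀP(t+1)B+R)(u(t)+L(t)x(t))] + Σ_{t=0}^{N−1} Tr(P(t+1)W). -/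
/-!
Completing the square with the Riccati recursion gives, for every realisation,
`xᵀQx + uᵀRu = (u + Lx)ᵀ(BᵀP(t+1)B + R)(u + Lx) + xᵀP(t)x - (Ax + Bu)ᵀP(t+1)(Ax + Bu)`.
Substituting `x(t+1) = Ax + Bu + w`, the last term equals `x(t+1)ᵀP(t+1)x(t+1)` up to the noise
terms `2 wᵀP(t+1)(Ax + Bu) + wᵀP(t+1)w`, so the sum over `t` telescopes (`x(0) = 0`, `P(N) = Q`).
In expectation the cross term vanishes, `w(t)` being centred and independent of `(x(t), u(t))`,
and `E[wᵀPw] = Tr(PW)`.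
-/

open Matrix Finset MeasureTheory ProbabilityTheory
open scoped ENNReal

/-- A random vector is Gaussian with mean `m` and covariance `W` iff every linear functional
of it is a real Gaussian with the corresponding mean and variance. -/
def IsGaussianVec {Ω : Type*} [MeasurableSpace Ω] (μ : Measure Ω) {n : ℕ}
    (w : Ω → Fin n → ℝ) (m : Fin n → ℝ) (W : Matrix (Fin n) (Fin n) ℝ) : Prop :=
  ∀ c : Fin n → ℝ,
    Measure.map (fun ω => c ⬝ᵥ w ω) μ =
      gaussianReal (c ⬝ᵥ m) (Real.toNNReal (c ⬝ᵥ (W *ᵥ c)))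

section QuadraticForm

variable {α ι κ ι' : Type*} [CommRing α] [Fintype ι] [Fintype κ] [Fintype ι']

theorem mulVec_dotProduct_mulVec (M : Matrix κ ι α) (N : Matrix κ ι' α) (x : ι → α)
    (y : ι' → α) : (M *ᵥ x) ⬝ᵥ (N *ᵥ y) = x ⬝ᵥ ((Mᵀ * N) *ᵥ y) := by
  rw [← vecMul_transpose M x, ← dotProduct_mulVec, mulVec_mulVec]

theorem Matrix.IsSymm.dotProduct_mulVec_comm {M : Matrix ι ι α} (hM : M.IsSymm) (x y : ι → α) :
    x ⬝ᵥ (M *ᵥ y) = y ⬝ᵥ (M *ᵥ x) := by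
  rw [dotProduct_mulVec, dotProduct_comm, ← mulVec_transpose, hM.eq]

theorem Matrix.IsSymm.add_dotProduct_mulVec_add {M : Matrix ι ι α} (hM : M.IsSymm)
    (x y : ι → α) :
    (x + y) ⬝ᵥ (M *ᵥ (x + y)) = x ⬝ᵥ (M *ᵥ x) + 2 * (y ⬝ᵥ (M *ᵥ x)) + y ⬝ᵥ (M *ᵥ y) := by
  simp only [mulVec_add, dotProduct_add, add_dotProduct]
  rw [hM.dotProduct_mulVec_comm x y]
  ring

end QuadraticForm

section Riccati

variable {α ι κ : Type*} [CommRing α] [Fintype ι] [Fintype κ] [DecidableEq κ]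
  (A Q : Matrix ι ι α) (B : Matrix ι κ α) (R : Matrix κ κ α)

noncomputable def riccatiStep (P : Matrix ι ι α) : Matrix ι ι α :=
  Aᵀ * P * A + Q - Aᵀ * P * B * (Bᵀ * P * B + R)⁻¹ * (Bᵀ * P * A)

variable {A Q B R}

theorem Matrix.IsSymm.riccatiStep {P : Matrix ι ι α} (hP : P.IsSymm) (hQ : Q.IsSymm)
    (hR : R.IsSymm) : (riccatiStep A Q B R P).IsSymm := by
  have hS : (Bᵀ * P * B + R).IsSymm := by
    simp [IsSymm, transpose_add, transpose_mul, hP.eq, hR.eq, Matrix.mul_assoc]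
  simp only [IsSymm, _root_.riccatiStep, transpose_sub, transpose_add, transpose_mul,
    transpose_nonsing_inv, transpose_transpose, hP.eq, hQ.eq, hS.eq]
  simp [Matrix.mul_assoc]

theorem riccati_completion_of_squares {P : Matrix ι ι α} (hP : P.IsSymm) (hR : R.IsSymm)
    {L : Matrix κ ι α} (hS : IsUnit (Bᵀ * P * B + R))
    (hL : L = (R + Bᵀ * P * B)⁻¹ * (Bᵀ * P * A)) (x : ι → α) (u : κ → α) :
    x ⬝ᵥ (Q *ᵥ x) + u ⬝ᵥ (R *ᵥ u) =
      (u + L *ᵥ x) ⬝ᵥ ((Bᵀ * P * B + R) *ᵥ (u + L *ᵥ x)) +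
        x ⬝ᵥ (riccatiStep A Q B R P *ᵥ x) - (A *ᵥ x + B *ᵥ u) ⬝ᵥ (P *ᵥ (A *ᵥ x + B *ᵥ u)) := by
  rw [add_comm R] at hL
  set S := Bᵀ * P * B + R
  set K := Bᵀ * P * A
  have hSsymm : S.IsSymm := by
    simp [S, IsSymm, transpose_add, transpose_mul, hP.eq, hR.eq, Matrix.mul_assoc]
  have hSL : S * L = K := by
    rw [hL, ← Matrix.mul_assoc, mul_nonsing_inv _ ((isUnit_iff_isUnit_det _).mp hS),
      Matrix.one_mul]
  have hKt : Kᵀ = Aᵀ * P * B := by simp [K, transpose_mul, hP.eq, Matrix.mul_assoc]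
  have hLSL : Lᵀ * (S * L) = Aᵀ * P * B * S⁻¹ * K := by
    rw [hSL, hL, transpose_mul, transpose_nonsing_inv, hSsymm.eq, hKt]
  have hLSu : (L *ᵥ x) ⬝ᵥ (S *ᵥ u) = u ⬝ᵥ (K *ᵥ x) := by
    rw [dotProduct_comm, mulVec_dotProduct_mulVec, hSsymm.eq, hSL]
  have hLSLx : (L *ᵥ x) ⬝ᵥ (S *ᵥ (L *ᵥ x)) = x ⬝ᵥ ((Aᵀ * P * B * S⁻¹ * K) *ᵥ x) := by
    rw [mulVec_mulVec, mulVec_dotProduct_mulVec, hLSL]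
  have hBPA : (B *ᵥ u) ⬝ᵥ (P *ᵥ (A *ᵥ x)) = u ⬝ᵥ (K *ᵥ x) := by
    rw [mulVec_mulVec, mulVec_dotProduct_mulVec, ← Matrix.mul_assoc]
  have hAPA : (A *ᵥ x) ⬝ᵥ (P *ᵥ (A *ᵥ x)) = x ⬝ᵥ ((Aᵀ * P * A) *ᵥ x) := by
    rw [mulVec_mulVec, mulVec_dotProduct_mulVec, ← Matrix.mul_assoc]
  have hBPB : (B *ᵥ u) ⬝ᵥ (P *ᵥ (B *ᵥ u)) = u ⬝ᵥ ((Bᵀ * P * B) *ᵥ u) := by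
    rw [mulVec_mulVec, mulVec_dotProduct_mulVec, ← Matrix.mul_assoc]
  rw [hSsymm.add_dotProduct_mulVec_add, hP.add_dotProduct_mulVec_add, hLSu, hLSLx, hBPA, hAPA,
    hBPB, _root_.riccatiStep]
  simp only [S, add_mulVec, sub_mulVec, dotProduct_add, dotProduct_sub]
  ring

theorem riccati_isSymm {P : ℕ → Matrix ι ι α} {N : ℕ} (hQ : Q.IsSymm) (hR : R.IsSymm)
    (hPN : P N = Q) (hRic : ∀ t < N, P t = riccatiStep A Q B R (P (t + 1))) {t : ℕ}
    (ht : t ≤ N) : (P t).IsSymm := by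
  induction ht using Nat.decreasingInduction with
  | self => rw [hPN]; exact hQ
  | of_succ k hk ih => rw [hRic k hk]; exact ih.riccatiStep hQ hR

theorem cost_eq_sum_completed_squares_add_noise {N : ℕ} {x w : ℕ → ι → α} {u : ℕ → κ → α}
    {P : ℕ → Matrix ι ι α} {L : ℕ → Matrix κ ι α} (hQ : Q.IsSymm) (hR : R.IsSymm)
    (hdyn : ∀ t < N, x (t + 1) = A *ᵥ x t + B *ᵥ u t + w t) (hx0 : x 0 = 0) (hPN : P N = Q)
    (hinv : ∀ t < N, IsUnit (Bᵀ * P (t + 1) * B + R))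
    (hRic : ∀ t < N, P t = riccatiStep A Q B R (P (t + 1)))
    (hL : ∀ t < N, L t = (R + Bᵀ * P (t + 1) * B)⁻¹ * (Bᵀ * P (t + 1) * A)) :
    x N ⬝ᵥ (Q *ᵥ x N) + ∑ t ∈ range N, (x t ⬝ᵥ (Q *ᵥ x t) + u t ⬝ᵥ (R *ᵥ u t)) =
      ∑ t ∈ range N,
          (u t + L t *ᵥ x t) ⬝ᵥ ((Bᵀ * P (t + 1) * B + R) *ᵥ (u t + L t *ᵥ x t)) +
        ∑ t ∈ range N, (2 * (w t ⬝ᵥ (P (t + 1) *ᵥ (A *ᵥ x t + B *ᵥ u t))) +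
          w t ⬝ᵥ (P (t + 1) *ᵥ w t)) := by
  have hstep : ∀ t ∈ range N, x t ⬝ᵥ (Q *ᵥ x t) + u t ⬝ᵥ (R *ᵥ u t) =
      ((u t + L t *ᵥ x t) ⬝ᵥ ((Bᵀ * P (t + 1) * B + R) *ᵥ (u t + L t *ᵥ x t)) +
        (2 * (w t ⬝ᵥ (P (t + 1) *ᵥ (A *ᵥ x t + B *ᵥ u t))) + w t ⬝ᵥ (P (t + 1) *ᵥ w t))) +
      (x t ⬝ᵥ (P t *ᵥ x t) - x (t + 1) ⬝ᵥ (P (t + 1) *ᵥ x (t + 1))) := by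
    intro t ht
    rw [mem_range] at ht
    have hP : (P (t + 1)).IsSymm := riccati_isSymm hQ hR hPN hRic ht
    rw [riccati_completion_of_squares hP hR (hinv t ht) (hL t ht), hdyn t ht, ← hRic t ht,
      hP.add_dotProduct_mulVec_add (A *ᵥ x t + B *ᵥ u t) (w t)]
    ring
  rw [sum_congr rfl hstep, sum_add_distrib, sum_add_distrib, sum_range_sub', hx0, hPN,
    zero_dotProduct]
  ring

end Riccati

section SecondMoments

variable {Ω ι κ : Type*} [MeasurableSpace Ω] {μ : Measure Ω} [Fintype κ]

theorem MemLp.mulVec_apply {p : ℝ≥0∞} {g : Ω → κ → ℝ} (M : Matrix ι κ ℝ)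
    (hg : ∀ j, MemLp (fun ω => g ω j) p μ) (i : ι) : MemLp (fun ω => (M *ᵥ g ω) i) p μ :=
  memLp_finsetSum _ fun j _ => (hg j).const_mul (M i j)

theorem IsGaussianVec.memLp_apply {n : ℕ} {w : Ω → Fin n → ℝ} {m : Fin n → ℝ}
    {W : Matrix (Fin n) (Fin n) ℝ} (hw : IsGaussianVec μ w m W) (hmeas : Measurable w)
    {p : ℝ≥0∞} (hp : p ≠ ∞) (i : Fin n) :
    MemLp (fun ω => w ω i) p μ := by
  have hmap := hw (Pi.single i 1)
  simp only [single_dotProduct, one_mul] at hmap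
  exact (hmap ▸ memLp_id_gaussianReal' p hp).comp_of_map
    ((measurable_pi_apply i).comp hmeas).aemeasurable

variable [Fintype ι]

theorem integrable_dotProduct_mulVec {f : Ω → ι → ℝ} {g : Ω → κ → ℝ} (M : Matrix ι κ ℝ)
    (hf : ∀ i, MemLp (fun ω => f ω i) 2 μ) (hg : ∀ j, MemLp (fun ω => g ω j) 2 μ) :
    Integrable (fun ω => f ω ⬝ᵥ (M *ᵥ g ω)) μ :=
  integrable_finsetSum _ fun i _ => (hf i).integrable_mul (MemLp.mulVec_apply M hg i)

theorem integral_dotProduct_mulVec {f : Ω → ι → ℝ} {g : Ω → κ → ℝ} (M : Matrix ι κ ℝ)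
    (hf : ∀ i, MemLp (fun ω => f ω i) 2 μ) (hg : ∀ j, MemLp (fun ω => g ω j) 2 μ) :
    ∫ ω, f ω ⬝ᵥ (M *ᵥ g ω) ∂μ = ∑ i, ∑ j, M i j * ∫ ω, f ω i * g ω j ∂μ := by
  have hfg : ∀ i j, Integrable (fun ω => M i j * (f ω i * g ω j)) μ :=
    fun i j => ((hf i).integrable_mul (hg j)).const_mul _
  have hexpand : ∀ ω, f ω ⬝ᵥ (M *ᵥ g ω) = ∑ i, ∑ j, M i j * (f ω i * g ω j) := by
    intro ω
    simp only [dotProduct, mulVec, mul_sum]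
    exact sum_congr rfl fun i _ => sum_congr rfl fun j _ => by ring
  simp only [hexpand]
  rw [integral_finsetSum _ fun i _ => integrable_finsetSum _ fun j _ => hfg i j]
  simp only [integral_finsetSum _ fun j _ => hfg _ j, integral_const_mul]

theorem integral_dotProduct_mulVec_eq_zero_of_indepFun {w : Ω → ι → ℝ} {z : Ω → κ → ℝ}
    (hind : IndepFun w z μ) (hmean : ∀ i, ∫ ω, w ω i ∂μ = 0)
    (hw : ∀ i, MemLp (fun ω => w ω i) 2 μ) (hz : ∀ j, MemLp (fun ω => z ω j) 2 μ)
    (M : Matrix ι κ ℝ) : ∫ ω, w ω ⬝ᵥ (M *ᵥ z ω) ∂μ = 0 := by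
  rw [integral_dotProduct_mulVec M hw hz]
  refine sum_eq_zero fun i _ => sum_eq_zero fun j _ => ?_
  have hij : IndepFun (fun ω => w ω i) (fun ω => z ω j) μ :=
    hind.comp (measurable_pi_apply i) (measurable_pi_apply j)
  rw [hij.integral_fun_mul_eq_mul_integral (hw i).1 (hz j).1, hmean i, zero_mul, mul_zero]

theorem integral_dotProduct_mulVec_self {w : Ω → ι → ℝ} {W : Matrix ι ι ℝ}
    (hcov : ∀ i j, ∫ ω, w ω i * w ω j ∂μ = W i j) (hw : ∀ i, MemLp (fun ω => w ω i) 2 μ)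
    (M : Matrix ι ι ℝ) : ∫ ω, w ω ⬝ᵥ (M *ᵥ w ω) ∂μ = (M * W).trace := by
  have hW : ∀ i j, W j i = W i j := fun i j => by simp only [← hcov, mul_comm]
  rw [integral_dotProduct_mulVec M hw hw]
  simp only [hcov, Matrix.trace, Matrix.diag, Matrix.mul_apply, hW]

theorem integral_two_mul_dotProduct_mulVec_add_dotProduct_mulVec_self {w : Ω → ι → ℝ}
    {z : Ω → ι → ℝ} {W : Matrix ι ι ℝ} (hind : IndepFun w z μ) (hmean : ∀ i, ∫ ω, w ω i ∂μ = 0)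
    (hcov : ∀ i j, ∫ ω, w ω i * w ω j ∂μ = W i j) (hw : ∀ i, MemLp (fun ω => w ω i) 2 μ)
    (hz : ∀ j, MemLp (fun ω => z ω j) 2 μ) (M : Matrix ι ι ℝ) :
    ∫ ω, (2 * (w ω ⬝ᵥ (M *ᵥ z ω)) + w ω ⬝ᵥ (M *ᵥ w ω)) ∂μ = (M * W).trace := by
  rw [integral_add ((integrable_dotProduct_mulVec M hw hz).const_mul 2)
      (integrable_dotProduct_mulVec M hw hw), integral_const_mul,
    integral_dotProduct_mulVec_eq_zero_of_indepFun hind hmean hw hz,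
    integral_dotProduct_mulVec_self hcov hw, mul_zero, zero_add]

end SecondMoments

theorem stmt_1_general {Ω : Type*} [MeasurableSpace Ω] (μ : Measure Ω)
    (n m N : ℕ)
    (A Q : Matrix (Fin n) (Fin n) ℝ) (B : Matrix (Fin n) (Fin m) ℝ)
    (R : Matrix (Fin m) (Fin m) ℝ) (W : Matrix (Fin n) (Fin n) ℝ)
    (hQ : Q.PosSemidef) (hR : R.PosDef)
    (x w : ℕ → Ω → Fin n → ℝ) (u : ℕ → Ω → Fin m → ℝ)
    (P : ℕ → Matrix (Fin n) (Fin n) ℝ) (L : ℕ → Matrix (Fin m) (Fin n) ℝ)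
    -- dynamics and initial condition
    (hdyn : ∀ t < N, ∀ ω, x (t + 1) ω = A *ᵥ x t ω + B *ᵥ u t ω + w t ω)
    (hx0 : ∀ ω, x 0 ω = 0)
    -- Riccati recursion and gains
    (hPN : P N = Q)
    (hinv : ∀ t < N, IsUnit (Bᵀ * P (t + 1) * B + R))
    (hRic : ∀ t < N,
      P t = Aᵀ * P (t + 1) * A + Q -
        Aᵀ * P (t + 1) * B * (Bᵀ * P (t + 1) * B + R)⁻¹ * (Bᵀ * P (t + 1) * A))
    (hL : ∀ t < N, L t = (R + Bᵀ * P (t + 1) * B)⁻¹ * (Bᵀ * P (t + 1) * A))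
    -- the noise is zero-mean Gaussian with covariance W
    (hGauss : ∀ t, IsGaussianVec μ (w t) 0 W)
    (hwmean : ∀ t i, ∫ ω, w t ω i ∂μ = 0)
    (hwcov : ∀ t i j, ∫ ω, w t ω i * w t ω j ∂μ = W i j)
    -- w(t) is independent of (x(t), u(t))
    (hindep : ∀ t, IndepFun (w t) (fun ω => (x t ω, u t ω)) μ)
    -- measurability and integrability
    (hwmeas : ∀ t, Measurable (w t))
    (hxL2 : ∀ t i, MemLp (fun ω => x t ω i) 2 μ)
    (huL2 : ∀ t i, MemLp (fun ω => u t ω i) 2 μ) :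
    ∫ ω, (x N ω ⬝ᵥ (Q *ᵥ x N ω) +
        ∑ t ∈ Finset.range N,
          (x t ω ⬝ᵥ (Q *ᵥ x t ω) + u t ω ⬝ᵥ (R *ᵥ u t ω))) ∂μ =
    (∫ ω, ∑ t ∈ Finset.range N,
        (u t ω + L t *ᵥ x t ω) ⬝ᵥ
          ((Bᵀ * P (t + 1) * B + R) *ᵥ (u t ω + L t *ᵥ x t ω)) ∂μ) +
      ∑ t ∈ Finset.range N, (P (t + 1) * W).trace := by
  have hQsymm : Q.IsSymm := isHermitian_iff_isSymm.mp hQ.1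
  have hRsymm : R.IsSymm := isHermitian_iff_isSymm.mp hR.1
  have hwL2 : ∀ t i, MemLp (fun ω => w t ω i) 2 μ := fun t =>
    (hGauss t).memLp_apply (hwmeas t) ENNReal.ofNat_ne_top
  have hzL2 : ∀ t j, MemLp (fun ω => (A *ᵥ x t ω + B *ᵥ u t ω) j) 2 μ := fun t j =>
    (MemLp.mulVec_apply A (hxL2 t) j).add (MemLp.mulVec_apply B (huL2 t) j)
  have hyL2 : ∀ t j, MemLp (fun ω => (u t ω + L t *ᵥ x t ω) j) 2 μ := fun t j =>
    (huL2 t j).add (MemLp.mulVec_apply (L t) (hxL2 t) j)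
  have hwz : ∀ t, IndepFun (w t) (fun ω => A *ᵥ x t ω + B *ᵥ u t ω) μ := fun t =>
    (hindep t).comp measurable_id
      (by fun_prop : Measurable fun p : (Fin n → ℝ) × (Fin m → ℝ) => A *ᵥ p.1 + B *ᵥ p.2)
  have hnoise : ∀ t, Integrable (fun ω =>
      2 * (w t ω ⬝ᵥ (P (t + 1) *ᵥ (A *ᵥ x t ω + B *ᵥ u t ω))) +
        w t ω ⬝ᵥ (P (t + 1) *ᵥ w t ω)) μ := fun t =>
    ((integrable_dotProduct_mulVec _ (hwL2 t) (hzL2 t)).const_mul 2).add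
      (integrable_dotProduct_mulVec _ (hwL2 t) (hwL2 t))
  rw [integral_congr_ae (ae_of_all μ fun ω =>
      cost_eq_sum_completed_squares_add_noise (x := (x · ω)) hQsymm hRsymm
        (fun t ht => hdyn t ht ω) (hx0 ω) hPN hinv hRic hL),
    integral_add
      (integrable_finsetSum _ fun t _ =>
        integrable_dotProduct_mulVec (Bᵀ * P (t + 1) * B + R) (hyL2 t) (hyL2 t))
      (integrable_finsetSum _ fun t _ => hnoise t),
    integral_finsetSum _ fun t _ => hnoise t]
  exact congrArg _ <| sum_congr rfl fun t _ =>
    integral_two_mul_dotProduct_mulVec_add_dotProduct_mulVec_self (hwz t) (hwmean t) (hwcov t)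
      (hwL2 t) (hzL2 t) _

/-- **Expected completion-of-squares (Corollary 1).**  If `x(0) = 0`, the noises `w(t)` are
pairwise-uncorrelated zero-mean Gaussian vectors with covariance `W`, and `w(t)` is
independent of `(x(t), u(t))`, then
`E[x(N)ᵀQx(N) + Σ (xᵀQx + uᵀRu)] = E[Σ (u+Lx)ᵀ(BᵀP(t+1)B+R)(u+Lx)] + Σ Tr(P(t+1)W)`. -/
theorem stmt_1 {Ω : Type*} [MeasurableSpace Ω] (μ : Measure Ω) [IsProbabilityMeasure μ]
    (n m N : ℕ)
    (A Q : Matrix (Fin n) (Fin n) ℝ) (B : Matrix (Fin n) (Fin m) ℝ)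
    (R : Matrix (Fin m) (Fin m) ℝ) (W : Matrix (Fin n) (Fin n) ℝ)
    (hQ : Q.PosSemidef) (hR : R.PosDef)
    (x w : ℕ → Ω → Fin n → ℝ) (u : ℕ → Ω → Fin m → ℝ)
    (P : ℕ → Matrix (Fin n) (Fin n) ℝ) (L : ℕ → Matrix (Fin m) (Fin n) ℝ)
    -- dynamics and initial condition
    (hdyn : ∀ t < N, ∀ ω, x (t + 1) ω = A *ᵥ x t ω + B *ᵥ u t ω + w t ω)
    (hx0 : ∀ ω, x 0 ω = 0)
    -- Riccati recursion and gains
    (hPN : P N = Q)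
    (hinv : ∀ t < N, IsUnit (Bᵀ * P (t + 1) * B + R))
    (hRic : ∀ t < N,
      P t = Aᵀ * P (t + 1) * A + Q -
        Aᵀ * P (t + 1) * B * (Bᵀ * P (t + 1) * B + R)⁻¹ * (Bᵀ * P (t + 1) * A))
    (hL : ∀ t < N, L t = (R + Bᵀ * P (t + 1) * B)⁻¹ * (Bᵀ * P (t + 1) * A))
    -- the noise is zero-mean Gaussian with covariance W
    (hGauss : ∀ t, IsGaussianVec μ (w t) 0 W)
    (hwmean : ∀ t i, ∫ ω, w t ω i ∂μ = 0)
    (hwcov : ∀ t i j, ∫ ω, w t ω i * w t ω j ∂μ = W i j)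
    -- pairwise uncorrelated noises
    (huncorr : ∀ k l, k ≠ l → ∀ i j, ∫ ω, w k ω i * w l ω j ∂μ = 0)
    -- w(t) is independent of (x(t), u(t))
    (hindep : ∀ t, IndepFun (w t) (fun ω => (x t ω, u t ω)) μ)
    -- measurability and integrability
    (hxmeas : ∀ t, Measurable (x t)) (humeas : ∀ t, Measurable (u t))
    (hwmeas : ∀ t, Measurable (w t))
    (hxL2 : ∀ t i, MemLp (fun ω => x t ω i) 2 μ)
    (huL2 : ∀ t i, MemLp (fun ω => u t ω i) 2 μ) :
    ∫ ω, (x N ω ⬝ᵥ (Q *ᵥ x N ω) +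
        ∑ t ∈ Finset.range N,
          (x t ω ⬝ᵥ (Q *ᵥ x t ω) + u t ω ⬝ᵥ (R *ᵥ u t ω))) ∂μ =
    (∫ ω, ∑ t ∈ Finset.range N,
        (u t ω + L t *ᵥ x t ω) ⬝ᵥ
          ((Bᵀ * P (t + 1) * B + R) *ᵥ (u t ω + L t *ᵥ x t ω)) ∂μ) +
      ∑ t ∈ Finset.range N, (P (t + 1) * W).trace :=
  stmt_1_general μ n m N A Q B R W hQ hR x w u P L hdyn hx0 hPN hinv hRic hL hGauss hwmean hwcov
    hindep hwmeas hxL2 huL2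
end

section
/- If (A,B) is stabilizable and (Q,A) is detectable (Q ⪰ 0, R ≻ 0), then the backward Riccati recursion X(t) = AᵀX(t+1)A + Q − AᵀX(t+1)B(BᵀX(t+1)B+R)⁻¹BᵀX(t+1)A with terminal condition X(N)=Q converges, as the horizon recedes (N−t → ∞), to the unique positive semidefinite stabilizing solution X of the discrete algebraic Riccati equation X = AᵀXA + Q − AᵀXB(BᵀXB+R)⁻¹BᵀXA, and the time-varying gains L(t) = (R+BᵀX(t+1)B)⁻¹BᵀX(t+1)A converge to L = (R+BᵀXB)⁻¹BᵀXA, with A−BL Schur stable. -/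
open Matrix Filter Topology

variable {n m : ℕ}

/-- A real square matrix is Schur stable iff all its (complex) eigenvalues lie strictly
inside the unit disc. -/
def SchurStable (A : Matrix (Fin n) (Fin n) ℝ) : Prop :=
  ∀ z ∈ spectrum ℂ (A.map (Complex.ofReal : ℝ → ℂ)), ‖z‖ < 1

/-- `(A, B)` is stabilizable iff some static feedback makes the closed loop Schur stable. -/
def Stabilizable (A : Matrix (Fin n) (Fin n) ℝ) (B : Matrix (Fin n) (Fin m) ℝ) : Prop :=
  ∃ L : Matrix (Fin m) (Fin n) ℝ, SchurStable (A - B * L)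

/-- `(C, A)` is detectable iff `(Aᵀ, Cᵀ)` is stabilizable. -/
def Detectable (C : Matrix (Fin m) (Fin n) ℝ) (A : Matrix (Fin n) (Fin n) ℝ) : Prop :=
  Stabilizable Aᵀ Cᵀ

/-!
Completing the square shows that, in the Loewner order, `riccati P` is the minimum over all gains
`L` of the closed-loop cost `(A - B L)ᵀ P (A - B L) + Q + Lᵀ R L`, attained at the Riccati gain.
Hence the Riccati map is monotone, so its iterates from `Q` increase; comparing with a stabilizing
gain `L` bounds them by the convergent Lyapunov series `∑ (Fʲ)ᵀ (Q + Lᵀ R L) Fʲ`, `F = A - B L`,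
so they converge, and by continuity the limit `X` solves the DARE. If the closed loop of `X` had
an eigenvector `v` with `|λ| ≥ 1`, the Lyapunov form of the DARE would force `Q v = 0` and
`K v = 0` for the gain `K` of `X`, making `v` an eigenvector of `A` that detectability forbids.
Finally, the difference `Δ` of two stabilizing solutions satisfies `Δ ≤ Fᵀ Δ F` for a stable `F`,
whence `Δ ≤ 0`, and symmetrically `Δ ≥ 0`.
-/

open scoped MatrixOrder

namespace Matrix

section LoewnerOrder

variable {ι κ : Type*} [Fintype ι] [Fintype κ]

theorem isClosed_setOf_posSemidef : IsClosed {M : Matrix ι ι ℝ | M.PosSemidef} := by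
  simp only [posSemidef_iff_dotProduct_mulVec, Set.ofPred_and, Set.ofPred_forall]
  exact (isClosed_eq (by fun_prop) continuous_id).inter
    (isClosed_iInter fun x => isClosed_le continuous_const (by fun_prop))

instance : OrderClosedTopology (Matrix ι ι ℝ) where
  isClosed_le' := isClosed_setOf_posSemidef.preimage (continuous_snd.sub continuous_fst)

theorem PosSemidef.transpose_mul_mul_same {M : Matrix ι ι ℝ} (hM : M.PosSemidef)
    (C : Matrix ι κ ℝ) : (Cᵀ * M * C).PosSemidef := by
  simpa using hM.conjTranspose_mul_mul_same C

theorem transpose_mul_mul_le_transpose_mul_mul {M N : Matrix ι ι ℝ} (h : M ≤ N)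
    (C : Matrix ι κ ℝ) : Cᵀ * M * C ≤ Cᵀ * N * C := by
  rw [le_iff, ← Matrix.sub_mul, ← Matrix.mul_sub]
  exact (le_iff.1 h).transpose_mul_mul_same C

theorem dotProduct_mulVec_le_of_le {M N : Matrix ι ι ℝ} (h : M ≤ N) (x : ι → ℝ) :
    x ⬝ᵥ M *ᵥ x ≤ x ⬝ᵥ N *ᵥ x := by
  have := (le_iff.1 h).dotProduct_mulVec_nonneg x
  rw [star_trivial, sub_mulVec, dotProduct_sub] at this
  linarith

theorem IsSymm.apply_eq_polarization [DecidableEq ι] {M : Matrix ι ι ℝ} (hM : M.IsSymm)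
    (i j : ι) :
    M i j = ((Pi.single i 1 + Pi.single j 1) ⬝ᵥ M *ᵥ (Pi.single i 1 + Pi.single j 1)
      - Pi.single i 1 ⬝ᵥ M *ᵥ Pi.single i 1 - Pi.single j 1 ⬝ᵥ M *ᵥ Pi.single j 1) / 2 := by
  have hji : M j i = M i j := hM.apply i j
  simp only [mulVec_add, dotProduct_add, add_dotProduct, mulVec_single_one, single_one_dotProduct,
    col_apply, hji]
  ring

theorem exists_tendsto_of_tendsto_dotProduct_mulVec {M : ℕ → Matrix ι ι ℝ}
    (hM : ∀ k, (M k).IsSymm) (h : ∀ x, ∃ l, Tendsto (fun k => x ⬝ᵥ M k *ᵥ x) atTop (𝓝 l)) :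
    ∃ X, Tendsto M atTop (𝓝 X) := by
  classical
  choose l hl using h
  refine ⟨of fun i j => (l (Pi.single i 1 + Pi.single j 1) - l (Pi.single i 1)
    - l (Pi.single j 1)) / 2, tendsto_pi_nhds.2 fun i => tendsto_pi_nhds.2 fun j => ?_⟩
  simp only [of_apply, (hM _).apply_eq_polarization i j]
  exact (((hl _).sub (hl _)).sub (hl _)).div_const 2

theorem exists_tendsto_of_monotone {P : ℕ → Matrix ι ι ℝ} (hmono : Monotone P)
    {Y : Matrix ι ι ℝ} (hY : ∀ k, P k ≤ Y) : ∃ X, Tendsto P atTop (𝓝 X) := by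
  obtain ⟨D, hD⟩ : ∃ D, Tendsto (fun k => P k - P 0) atTop (𝓝 D) := by
    refine exists_tendsto_of_tendsto_dotProduct_mulVec
      (fun k => (le_iff.1 (hmono k.zero_le)).isHermitian) fun x => ?_
    have hquad : Monotone fun k => x ⬝ᵥ (P k - P 0) *ᵥ x := fun k l hkl =>
      dotProduct_mulVec_le_of_le (sub_le_sub_right (hmono hkl) _) x
    refine ⟨_, tendsto_atTop_ciSup hquad ⟨x ⬝ᵥ (Y - P 0) *ᵥ x, ?_⟩⟩
    rintro _ ⟨k, rfl⟩
    exact dotProduct_mulVec_le_of_le (sub_le_sub_right (hY k) _) x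
  exact ⟨D + P 0, by simpa using hD.add_const (P 0)⟩

end LoewnerOrder

section Complexification

variable {ι κ μ : Type*}

theorem map_ofReal_mul [Fintype κ] (M : Matrix ι κ ℝ) (N : Matrix κ μ ℝ) :
    (M * N).map Complex.ofReal = M.map Complex.ofReal * N.map Complex.ofReal :=
  Matrix.map_mul (f := Complex.ofRealHom)

theorem map_ofReal_pow [Fintype ι] [DecidableEq ι] (M : Matrix ι ι ℝ) (k : ℕ) :
    (M ^ k).map Complex.ofReal = M.map Complex.ofReal ^ k :=
  Matrix.map_pow M Complex.ofRealHom k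

theorem transpose_map_ofReal (M : Matrix ι κ ℝ) :
    Mᵀ.map Complex.ofReal = (M.map Complex.ofReal)ᴴ := by
  ext; simp

variable [Fintype ι] [DecidableEq ι]

open scoped ComplexOrder in
theorem PosSemidef.map_ofReal {M : Matrix ι ι ℝ} (hM : M.PosSemidef) :
    (M.map Complex.ofReal).PosSemidef := by
  obtain ⟨C, rfl⟩ : ∃ C : Matrix ι ι ℝ, M = Cᵀ * C := by
    refine ⟨CFC.sqrt M, ?_⟩
    have hsymm : (CFC.sqrt M)ᵀ = CFC.sqrt M := by
      rw [← conjTranspose_eq_transpose_of_trivial, ← star_eq_conjTranspose]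
      exact (CFC.sqrt_nonneg M).isSelfAdjoint.star_eq
    rw [hsymm, CFC.sqrt_mul_sqrt_self M hM.nonneg]
  rw [map_ofReal_mul, transpose_map_ofReal]
  exact posSemidef_conjTranspose_mul_self _

open scoped ComplexOrder in
theorem PosDef.map_ofReal {M : Matrix ι ι ℝ} (hM : M.PosDef) : (M.map Complex.ofReal).PosDef :=
  hM.posSemidef.map_ofReal.posDef_iff_isUnit.2 (hM.isUnit.map Complex.ofRealHom.mapMatrix)

end Complexification

variable {ι κ : Type*} [Fintype ι]

theorem star_dotProduct_conjTranspose_mul_mul_mulVec [Fintype κ] (M : Matrix κ κ ℂ)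
    (N : Matrix κ ι ℂ) (v : ι → ℂ) :
    star v ⬝ᵥ (Nᴴ * M * N) *ᵥ v = star (N *ᵥ v) ⬝ᵥ M *ᵥ (N *ᵥ v) := by
  rw [← mulVec_mulVec, ← mulVec_mulVec, dotProduct_mulVec, ← star_mulVec]

variable [DecidableEq ι]

theorem mem_spectrum_iff_exists_mulVec_eq_smul {K : Type*} [Field K] {M : Matrix ι ι K}
    {z : K} : z ∈ spectrum K M ↔ ∃ v ≠ 0, M *ᵥ v = z • v := by
  rw [← spectrum_toLin', ← Module.End.hasEigenvalue_iff_mem_spectrum]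
  constructor
  · intro h
    obtain ⟨v, hv⟩ := h.exists_hasEigenvector
    exact ⟨v, hv.2, by simpa using hv.apply_eq_smul⟩
  · rintro ⟨v, hv, h⟩
    exact Module.End.hasEigenvalue_of_hasEigenvector
      ⟨by simpa [Module.End.mem_eigenspace_iff] using h, hv⟩

theorem spectrum_transpose {R : Type*} [CommRing R] (M : Matrix ι ι R) :
    spectrum R Mᵀ = spectrum R M := by
  ext z
  simp only [spectrum.mem_iff, isUnit_iff_isUnit_det, ← det_transpose (_ - M), transpose_sub,
    Algebra.algebraMap_eq_smul_one, transpose_smul, transpose_one]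

end Matrix

@[fun_prop]
theorem ContinuousAt.matrix_mul {X ι κ μ R : Type*} [TopologicalSpace X] [Fintype κ]
    [TopologicalSpace R] [Mul R] [AddCommMonoid R] [ContinuousAdd R] [ContinuousMul R]
    {f : X → Matrix ι κ R} {g : X → Matrix κ μ R} {x : X} (hf : ContinuousAt f x)
    (hg : ContinuousAt g x) : ContinuousAt (fun y => f y * g y) x :=
  (continuous_fst.matrix_mul continuous_snd).continuousAt.comp (hf.prodMk hg)

section Lyapunov

variable {ι : Type*} [Fintype ι]

theorem le_sum_transpose_pow_mul_mul_pow [DecidableEq ι] {F S : Matrix ι ι ℝ}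
    {P : ℕ → Matrix ι ι ℝ} (h0 : P 0 ≤ S) (hstep : ∀ k, P (k + 1) ≤ Fᵀ * P k * F + S)
    (k : ℕ) : P k ≤ ∑ j ∈ Finset.range (k + 1), (F ^ j)ᵀ * S * F ^ j := by
  induction k with
  | zero => simpa using h0
  | succ k ih =>
    refine (hstep k).trans ?_
    have hsum : ∑ j ∈ Finset.range (k + 1), (F ^ (j + 1))ᵀ * S * F ^ (j + 1)
        = Fᵀ * (∑ j ∈ Finset.range (k + 1), (F ^ j)ᵀ * S * F ^ j) * F := by
      simp only [Finset.mul_sum, Finset.sum_mul, pow_succ, transpose_mul, Matrix.mul_assoc]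
    rw [Finset.sum_range_succ', hsum, pow_zero, transpose_one, Matrix.one_mul, Matrix.mul_one]
    exact add_le_add_left (transpose_mul_mul_le_transpose_mul_mul ih F) S

open scoped ComplexOrder in
theorem dotProduct_mulVec_eq_zero_of_lyapunov {X W F : Matrix ι ι ℂ} (hX : X.PosSemidef)
    (hW : W.PosSemidef) (h : X = Fᴴ * X * F + W) {z : ℂ} {v : ι → ℂ} (hv : F *ᵥ v = z • v)
    (hz : 1 ≤ ‖z‖) : star v ⬝ᵥ W *ᵥ v = 0 := by
  have hFXF : star v ⬝ᵥ (Fᴴ * X * F) *ᵥ v = ((‖z‖ ^ 2 : ℝ) : ℂ) * (star v ⬝ᵥ X *ᵥ v) := by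
    rw [star_dotProduct_conjTranspose_mul_mul_mulVec, hv, star_smul, mulVec_smul,
      dotProduct_smul, smul_dotProduct, smul_eq_mul, smul_eq_mul, ← mul_assoc, mul_comm z,
      Complex.star_def, Complex.conj_mul', Complex.ofReal_pow]
  have hquad := congrArg (fun M => star v ⬝ᵥ M *ᵥ v) h
  simp only [add_mulVec, dotProduct_add, hFXF] at hquad
  have hcoef : (0 : ℂ) ≤ ((‖z‖ ^ 2 - 1 : ℝ) : ℂ) := by
    rw [Complex.zero_le_real]; nlinarith
  refine le_antisymm ?_ (hW.dotProduct_mulVec_nonneg v)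
  calc star v ⬝ᵥ W *ᵥ v = -(((‖z‖ ^ 2 - 1 : ℝ) : ℂ) * (star v ⬝ᵥ X *ᵥ v)) := by
        push_cast at hquad ⊢; linear_combination -hquad
    _ ≤ 0 := neg_nonpos.2 (mul_nonneg hcoef (hX.dotProduct_mulVec_nonneg v))

end Lyapunov

section SchurStability

variable {M : Matrix (Fin n) (Fin n) ℝ}

theorem SchurStable.norm_lt_one (hM : SchurStable M) {z : ℂ} {v : Fin n → ℂ} (hv : v ≠ 0)
    (h : M.map Complex.ofReal *ᵥ v = z • v) : ‖z‖ < 1 :=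
  hM z (mem_spectrum_iff_exists_mulVec_eq_smul.2 ⟨v, hv, h⟩)

theorem SchurStable.transpose (hM : SchurStable M) : SchurStable Mᵀ := by
  intro z hz
  rw [transpose_map, spectrum_transpose] at hz
  exact hM z hz

theorem Detectable.norm_lt_one {C : Matrix (Fin m) (Fin n) ℝ} {A : Matrix (Fin n) (Fin n) ℝ}
    (hCA : Detectable C A) {z : ℂ} {v : Fin n → ℂ} (hv : v ≠ 0)
    (hCv : C.map Complex.ofReal *ᵥ v = 0) (hAv : A.map Complex.ofReal *ᵥ v = z • v) :
    ‖z‖ < 1 := by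
  obtain ⟨L, hL⟩ := hCA
  refine hL.transpose.norm_lt_one hv ?_
  simp [Matrix.map_sub, map_ofReal_mul, sub_mulVec, ← mulVec_mulVec, hCv, hAv]

attribute [local instance] Matrix.frobeniusNormedAddCommGroup Matrix.frobeniusNormedRing
  Matrix.frobeniusNormedAlgebra

theorem SchurStable.spectralRadius_lt_one (hM : SchurStable M) :
    spectralRadius ℂ (M.map Complex.ofReal) < 1 := by
  rcases (spectrum ℂ (M.map Complex.ofReal)).eq_empty_or_nonempty with h | h
  · simp [spectralRadius, h]
  · exact spectrum.spectralRadius_lt_of_forall_lt_of_nonempty h fun z hz => by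
      simpa [← NNReal.coe_lt_coe] using hM z hz

/-- Gelfand's formula, transported along the isometry `M ↦ M.map Complex.ofReal`. -/
theorem SchurStable.exists_eventually_norm_pow_le (hM : SchurStable M) :
    ∃ r : ℝ, 0 ≤ r ∧ r < 1 ∧ ∀ᶠ k in atTop, ‖M ^ k‖ ≤ r ^ k := by
  have : CompleteSpace (Matrix (Fin n) (Fin n) ℂ) := FiniteDimensional.complete ℂ _
  obtain ⟨r, hr0, hρr, hr1⟩ := ENNReal.lt_iff_exists_real_btwn.1 hM.spectralRadius_lt_one
  refine ⟨r, hr0, by simpa using hr1, ?_⟩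
  filter_upwards [(spectrum.pow_norm_pow_one_div_tendsto_nhds_spectralRadius
    (M.map Complex.ofReal)).eventually_lt_const hρr, eventually_gt_atTop 0] with k hk hk0
  rw [ENNReal.ofReal_lt_ofReal_iff', one_div, Real.rpow_inv_lt_iff_of_pos (norm_nonneg _) hr0
    (by positivity), Real.rpow_natCast, ← map_ofReal_pow,
    frobenius_norm_map_eq _ _ Complex.norm_real] at hk
  exact hk.1.le

theorem SchurStable.tendsto_pow_atTop_nhds_zero (hM : SchurStable M) :
    Tendsto (M ^ ·) atTop (𝓝 0) := by
  obtain ⟨r, hr0, hr1, hr⟩ := hM.exists_eventually_norm_pow_le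
  exact squeeze_zero_norm' hr (tendsto_pow_atTop_nhds_zero_of_lt_one hr0 hr1)

theorem SchurStable.summable_transpose_mul_mul (hM : SchurStable M)
    (S : Matrix (Fin n) (Fin n) ℝ) : Summable fun k => (M ^ k)ᵀ * S * M ^ k := by
  obtain ⟨r, hr0, hr1, hr⟩ := hM.exists_eventually_norm_pow_le
  refine Summable.of_norm_bounded_eventually_nat
    ((summable_geometric_of_lt_one hr0 hr1).mul_left ‖S‖) ?_
  filter_upwards [hr] with k hk
  calc ‖(M ^ k)ᵀ * S * M ^ k‖ ≤ ‖M ^ k‖ * ‖S‖ * ‖M ^ k‖ := by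
        simpa only [frobenius_norm_transpose] using
          norm_mul₃_le (a := (M ^ k)ᵀ) (b := S) (c := M ^ k)
    _ ≤ r ^ k * ‖S‖ * 1 := by
        gcongr
        exact hk.trans (pow_le_one₀ hr0 hr1.le)
    _ = ‖S‖ * r ^ k := by ring

theorem SchurStable.nonpos_of_le_transpose_mul_mul {Δ : Matrix (Fin n) (Fin n) ℝ}
    (hM : SchurStable M) (h : Δ ≤ Mᵀ * Δ * M) : Δ ≤ 0 := by
  have hiter : ∀ k, Δ ≤ (M ^ k)ᵀ * Δ * M ^ k := by
    intro k
    induction k with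
    | zero => simp
    | succ k ih =>
      refine h.trans ?_
      simpa only [pow_succ, transpose_mul, Matrix.mul_assoc] using
        transpose_mul_mul_le_transpose_mul_mul ih M
  have hcont : Continuous fun N : Matrix (Fin n) (Fin n) ℝ => Nᵀ * Δ * N := by fun_prop
  have hlim : Tendsto (fun k => (M ^ k)ᵀ * Δ * M ^ k) atTop (𝓝 0) := by
    simpa [Function.comp_def] using (hcont.tendsto 0).comp hM.tendsto_pow_atTop_nhds_zero
  exact ge_of_tendsto' hlim hiter

end SchurStability

section Riccati

variable {ι κ : Type*} [Fintype ι] [Fintype κ]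
  (A Q : Matrix ι ι ℝ) (B : Matrix ι κ ℝ) (R : Matrix κ κ ℝ)

def closedLoopCost (P : Matrix ι ι ℝ) (L : Matrix κ ι ℝ) : Matrix ι ι ℝ :=
  (A - B * L)ᵀ * P * (A - B * L) + Q + Lᵀ * R * L

variable [DecidableEq κ]

noncomputable def riccati (P : Matrix ι ι ℝ) : Matrix ι ι ℝ :=
  Aᵀ * P * A + Q - Aᵀ * P * B * (Bᵀ * P * B + R)⁻¹ * (Bᵀ * P * A)

noncomputable def riccatiGain (P : Matrix ι ι ℝ) : Matrix κ ι ℝ :=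
  (R + Bᵀ * P * B)⁻¹ * (Bᵀ * P * A)

variable {A Q B R} {P P' : Matrix ι ι ℝ}

omit [DecidableEq κ] in
theorem closedLoopCost_sub_closedLoopCost (P P' : Matrix ι ι ℝ) (L : Matrix κ ι ℝ) :
    closedLoopCost A Q B R P L - closedLoopCost A Q B R P' L
      = (A - B * L)ᵀ * (P - P') * (A - B * L) := by
  simp only [closedLoopCost, Matrix.mul_sub, Matrix.sub_mul]
  abel

omit [DecidableEq κ] in
theorem closedLoopCost_mono (h : P ≤ P') (L : Matrix κ ι ℝ) :
    closedLoopCost A Q B R P L ≤ closedLoopCost A Q B R P' L := by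
  rw [← sub_nonneg, closedLoopCost_sub_closedLoopCost]
  exact ((le_iff.1 h).transpose_mul_mul_same _).nonneg

omit [DecidableEq κ] in
theorem posDef_add_transpose_mul_mul (hR : R.PosDef) (hP : P.PosSemidef) :
    (R + Bᵀ * P * B).PosDef :=
  hR.add_posSemidef (hP.transpose_mul_mul_same B)

theorem closedLoopCost_eq_riccati_add (hR : R.PosDef) (hP : P.PosSemidef)
    (L : Matrix κ ι ℝ) :
    closedLoopCost A Q B R P L = riccati A Q B R P
      + (L - riccatiGain A B R P)ᵀ * (R + Bᵀ * P * B) * (L - riccatiGain A B R P) := by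
  set W := R + Bᵀ * P * B
  set K := riccatiGain A B R P
  have hW : IsUnit W.det :=
    (isUnit_iff_isUnit_det W).1 (posDef_add_transpose_mul_mul hR hP).isUnit
  have hWt : Wᵀ = W := (posDef_add_transpose_mul_mul hR hP).isHermitian
  have hPt : Pᵀ = P := hP.isHermitian
  have hWK : W * K = Bᵀ * P * A := mul_nonsing_inv_cancel_left _ _ hW
  have hKW : Kᵀ * W = Aᵀ * P * B := by
    rw [← hWt, ← transpose_mul, hWK]
    simp [hPt, Matrix.mul_assoc]
  have hsq : (L - K)ᵀ * W * (L - K) = Lᵀ * W * L - Lᵀ * (Bᵀ * P * A) - Aᵀ * P * B * L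
      + Aᵀ * P * B * W⁻¹ * (Bᵀ * P * A) := by
    rw [transpose_sub, Matrix.sub_mul, Matrix.sub_mul, Matrix.mul_sub, Matrix.mul_sub,
      Matrix.mul_assoc Lᵀ W K, hWK, hKW]
    simp only [K, W, riccatiGain, Matrix.mul_assoc]
    abel
  rw [closedLoopCost, riccati, hsq, add_comm (Bᵀ * P * B)]
  simp only [W, transpose_sub, transpose_mul, Matrix.mul_add, Matrix.add_mul, Matrix.sub_mul,
    Matrix.mul_sub, Matrix.mul_assoc]
  abel

theorem riccati_eq_closedLoopCost_riccatiGain (hR : R.PosDef) (hP : P.PosSemidef) :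
    riccati A Q B R P = closedLoopCost A Q B R P (riccatiGain A B R P) := by
  simp [closedLoopCost_eq_riccati_add hR hP]

theorem riccati_le_closedLoopCost (hR : R.PosDef) (hP : P.PosSemidef) (L : Matrix κ ι ℝ) :
    riccati A Q B R P ≤ closedLoopCost A Q B R P L := by
  rw [closedLoopCost_eq_riccati_add hR hP]
  exact le_add_of_nonneg_right
    ((posDef_add_transpose_mul_mul hR hP).posSemidef.transpose_mul_mul_same _).nonneg

theorem riccati_posSemidef (hQ : Q.PosSemidef) (hR : R.PosDef) (hP : P.PosSemidef) :
    (riccati A Q B R P).PosSemidef := by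
  rw [riccati_eq_closedLoopCost_riccatiGain hR hP, closedLoopCost, add_assoc]
  exact (hP.transpose_mul_mul_same _).add (hQ.add (hR.posSemidef.transpose_mul_mul_same _))

theorem riccati_mono (hR : R.PosDef) (hP : P.PosSemidef) (hP' : P'.PosSemidef) (h : P ≤ P') :
    riccati A Q B R P ≤ riccati A Q B R P' := by
  rw [riccati_eq_closedLoopCost_riccatiGain hR hP']
  exact (riccati_le_closedLoopCost hR hP _).trans (closedLoopCost_mono h _)

theorem riccati_zero : riccati A Q B R 0 = Q := by simp [riccati]

theorem riccati_eq_sub_mul_riccatiGain (P : Matrix ι ι ℝ) :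
    riccati A Q B R P = Aᵀ * P * A + Q - Aᵀ * P * B * riccatiGain A B R P := by
  simp [riccati, riccatiGain, add_comm, Matrix.mul_assoc]

theorem continuousAt_riccatiGain (hR : R.PosDef) (hP : P.PosSemidef) :
    ContinuousAt (riccatiGain A B R) P := by
  have hdet : ContinuousAt Ring.inverse (R + Bᵀ * P * B).det := by
    simpa [Ring.inverse_eq_inv'] using
      continuousAt_inv₀ (posDef_add_transpose_mul_mul hR hP).det_pos.ne'
  have hinv : ContinuousAt (fun P => (R + Bᵀ * P * B)⁻¹) P :=
    ContinuousAt.comp (f := fun P => R + Bᵀ * P * B) (continuousAt_matrix_inv _ hdet)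
      (by fun_prop)
  unfold riccatiGain
  fun_prop

theorem continuousAt_riccati (hR : R.PosDef) (hP : P.PosSemidef) :
    ContinuousAt (riccati A Q B R) P := by
  have := continuousAt_riccatiGain (A := A) (B := B) hR hP
  rw [funext riccati_eq_sub_mul_riccatiGain]
  fun_prop

theorem sub_le_transpose_mul_mul_sub_of_riccati_eq (hR : R.PosDef) (hP : P.PosSemidef)
    (hP' : P'.PosSemidef) (hPfix : P = riccati A Q B R P) (hP'fix : P' = riccati A Q B R P') :
    P - P' ≤ (A - B * riccatiGain A B R P')ᵀ * (P - P') * (A - B * riccatiGain A B R P') := by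
  have h1 : riccati A Q B R P ≤ closedLoopCost A Q B R P (riccatiGain A B R P') :=
    riccati_le_closedLoopCost hR hP _
  have h2 : riccati A Q B R P' = closedLoopCost A Q B R P' (riccatiGain A B R P') :=
    riccati_eq_closedLoopCost_riccatiGain hR hP'
  rw [← hPfix] at h1
  rw [← hP'fix] at h2
  generalize riccatiGain A B R P' = L at h1 h2 ⊢
  calc P - P' ≤ closedLoopCost A Q B R P L - P' := sub_le_sub_right h1 _
    _ = (A - B * L)ᵀ * (P - P') * (A - B * L) := by
        rw [← closedLoopCost_sub_closedLoopCost (Q := Q) (R := R), ← h2]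

theorem riccati_iterate_posSemidef {P : ℕ → Matrix ι ι ℝ} (hQ : Q.PosSemidef) (hR : R.PosDef)
    (hP0 : P 0 = Q) (hPrec : ∀ k, P (k + 1) = riccati A Q B R (P k)) (k : ℕ) : (P k).PosSemidef := by
  induction k with
  | zero => rwa [hP0]
  | succ k ih => rw [hPrec]; exact riccati_posSemidef hQ hR ih

theorem riccati_iterate_monotone {P : ℕ → Matrix ι ι ℝ} (hQ : Q.PosSemidef) (hR : R.PosDef)
    (hP0 : P 0 = Q) (hPrec : ∀ k, P (k + 1) = riccati A Q B R (P k)) : Monotone P := by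
  have hpsd := riccati_iterate_posSemidef hQ hR hP0 hPrec
  refine monotone_nat_of_le_succ fun k => ?_
  induction k with
  | zero =>
    rw [hPrec 0, hP0]
    simpa only [riccati_zero] using
      riccati_mono (A := A) (B := B) hR PosSemidef.zero hQ hQ.nonneg
  | succ k ih =>
    rw [hPrec k, hPrec (k + 1)]
    exact riccati_mono hR (hpsd k) (hpsd (k + 1)) ih

end Riccati

section DARE

variable {A Q : Matrix (Fin n) (Fin n) ℝ} {B : Matrix (Fin n) (Fin m) ℝ}
  {R : Matrix (Fin m) (Fin m) ℝ} {X X' : Matrix (Fin n) (Fin n) ℝ}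

open scoped ComplexOrder in
theorem schurStable_of_eq_closedLoopCost (hQ : Q.PosSemidef) (hR : R.PosDef)
    (hdet : Detectable Q A) {K : Matrix (Fin m) (Fin n) ℝ} (hX : X.PosSemidef)
    (h : X = closedLoopCost A Q B R X K) : SchurStable (A - B * K) := by
  intro z hz
  by_contra! hz1
  obtain ⟨v, hv0, hv⟩ := mem_spectrum_iff_exists_mulVec_eq_smul.1 hz
  have hc : X.map Complex.ofReal = ((A - B * K).map Complex.ofReal)ᴴ * X.map Complex.ofReal
      * (A - B * K).map Complex.ofReal + (Q.map Complex.ofReal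
        + (K.map Complex.ofReal)ᴴ * R.map Complex.ofReal * K.map Complex.ofReal) := by
    conv_lhs => rw [h]
    simp only [closedLoopCost, Matrix.map_add _ Complex.ofReal_add, map_ofReal_mul,
      transpose_map_ofReal, add_assoc]
  have hQc := hQ.map_ofReal
  have hRc := hR.map_ofReal
  have hW := dotProduct_mulVec_eq_zero_of_lyapunov hX.map_ofReal
    (hQc.add (hRc.posSemidef.conjTranspose_mul_mul_same _)) hc hv hz1
  rw [add_mulVec, dotProduct_add, star_dotProduct_conjTranspose_mul_mul_mulVec,
    add_eq_zero_iff_of_nonneg (hQc.dotProduct_mulVec_nonneg v)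
      (hRc.posSemidef.dotProduct_mulVec_nonneg _)] at hW
  have hQv : Q.map Complex.ofReal *ᵥ v = 0 := (hQc.dotProduct_mulVec_zero_iff v).1 hW.1
  have hKv : K.map Complex.ofReal *ᵥ v = 0 := by
    by_contra hne
    exact (hRc.dotProduct_mulVec_pos hne).ne' hW.2
  refine hz1.not_gt (hdet.norm_lt_one hv0 hQv ?_)
  simpa [Matrix.map_sub, map_ofReal_mul, sub_mulVec, ← mulVec_mulVec, hKv] using hv

theorem eq_of_riccati_eq_of_schurStable (hR : R.PosDef) (hX : X.PosSemidef)
    (hX' : X'.PosSemidef) (hXfix : X = riccati A Q B R X) (hX'fix : X' = riccati A Q B R X')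
    (hs : SchurStable (A - B * riccatiGain A B R X))
    (hs' : SchurStable (A - B * riccatiGain A B R X')) : X' = X :=
  le_antisymm
    (sub_nonpos.1 (hs.nonpos_of_le_transpose_mul_mul
      (sub_le_transpose_mul_mul_sub_of_riccati_eq hR hX' hX hX'fix hXfix)))
    (sub_nonpos.1 (hs'.nonpos_of_le_transpose_mul_mul
      (sub_le_transpose_mul_mul_sub_of_riccati_eq hR hX hX' hXfix hX'fix)))

variable {P : ℕ → Matrix (Fin n) (Fin n) ℝ}

theorem riccati_iterate_le_tsum (hQ : Q.PosSemidef) (hR : R.PosDef) (hP0 : P 0 = Q)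
    (hPrec : ∀ k, P (k + 1) = riccati A Q B R (P k)) {L : Matrix (Fin m) (Fin n) ℝ}
    (hL : SchurStable (A - B * L)) (k : ℕ) :
    P k ≤ ∑' j, ((A - B * L) ^ j)ᵀ * (Q + Lᵀ * R * L) * (A - B * L) ^ j := by
  have hS : (Q + Lᵀ * R * L).PosSemidef := hQ.add (hR.posSemidef.transpose_mul_mul_same L)
  refine (le_sum_transpose_pow_mul_mul_pow ?_ (fun k => ?_) k).trans
    ((hL.summable_transpose_mul_mul _).sum_le_tsum _
      fun j _ => (hS.transpose_mul_mul_same _).nonneg)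
  · rw [hP0]
    exact le_add_of_nonneg_right (hR.posSemidef.transpose_mul_mul_same L).nonneg
  · rw [hPrec, ← add_assoc]
    exact riccati_le_closedLoopCost hR (riccati_iterate_posSemidef hQ hR hP0 hPrec k) L

end DARE

/-- **Convergence of the backward Riccati recursion.**  If `(A,B)` is stabilizable and
`(Q,A)` is detectable (`Q ⪰ 0`, `R ≻ 0`), then the backward Riccati iterates (indexed here
by the number `k = N − t` of steps to go, so `P 0 = Q`) converge to the unique positive
semidefinite stabilizing solution `X` of the DARE, the corresponding gains converge to
`L = (R+BᵀXB)⁻¹BᵀXA`, and `A − BL` is Schur stable. -/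
theorem stmt_19
    (A Q : Matrix (Fin n) (Fin n) ℝ) (B : Matrix (Fin n) (Fin m) ℝ)
    (R : Matrix (Fin m) (Fin m) ℝ)
    (hQ : Q.PosSemidef) (hR : R.PosDef)
    (hstab : Stabilizable A B) (hdet : Detectable Q A)
    (P : ℕ → Matrix (Fin n) (Fin n) ℝ)
    (hP0 : P 0 = Q)
    (hPrec : ∀ k, P (k + 1) =
      Aᵀ * P k * A + Q -
        Aᵀ * P k * B * (Bᵀ * P k * B + R)⁻¹ * (Bᵀ * P k * A)) :
    ∃ X : Matrix (Fin n) (Fin n) ℝ,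
      (X.PosSemidef ∧
        X = Aᵀ * X * A + Q -
          Aᵀ * X * B * (Bᵀ * X * B + R)⁻¹ * (Bᵀ * X * A) ∧
        SchurStable (A - B * ((R + Bᵀ * X * B)⁻¹ * (Bᵀ * X * A)))) ∧
      (∀ X' : Matrix (Fin n) (Fin n) ℝ,
        (X'.PosSemidef ∧
          X' = Aᵀ * X' * A + Q -
            Aᵀ * X' * B * (Bᵀ * X' * B + R)⁻¹ * (Bᵀ * X' * A) ∧
          SchurStable (A - B * ((R + Bᵀ * X' * B)⁻¹ * (Bᵀ * X' * A)))) → X' = X) ∧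
      Tendsto P atTop (𝓝 X) ∧
      Tendsto (fun k => (R + Bᵀ * P k * B)⁻¹ * (Bᵀ * P k * A)) atTop
        (𝓝 ((R + Bᵀ * X * B)⁻¹ * (Bᵀ * X * A))) := by
  change ∀ k, P (k + 1) = riccati A Q B R (P k) at hPrec
  obtain ⟨L, hL⟩ := hstab
  obtain ⟨X, hX⟩ := exists_tendsto_of_monotone (riccati_iterate_monotone hQ hR hP0 hPrec)
    (riccati_iterate_le_tsum hQ hR hP0 hPrec hL)
  have hXpsd : X.PosSemidef :=
    nonneg_iff_posSemidef.1 <| ge_of_tendsto' hX fun k =>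
      (riccati_iterate_posSemidef hQ hR hP0 hPrec k).nonneg
  have hXfix : X = riccati A Q B R X :=
    tendsto_nhds_unique (hX.comp (tendsto_add_atTop_nat 1))
      (((continuousAt_riccati hR hXpsd).tendsto.comp hX).congr fun k => (hPrec k).symm)
  have hXstab : SchurStable (A - B * riccatiGain A B R X) :=
    schurStable_of_eq_closedLoopCost hQ hR hdet hXpsd
      (hXfix.trans (riccati_eq_closedLoopCost_riccatiGain hR hXpsd))
  refine ⟨X, ⟨hXpsd, hXfix, hXstab⟩, fun X' ⟨hX'psd, hX'fix, hX'stab⟩ => ?_, hX,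
    (continuousAt_riccatiGain hR hXpsd).tendsto.comp hX⟩
  exact eq_of_riccati_eq_of_schurStable hR hXpsd hX'psd hXfix hX'fix hXstab hX'stab
end
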